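/- arXiv:2604.18211 — 2 statements merged into one kernel-verified Lean document; each statement's English description precedes it below -/
import Mathlib

section
/- Let r > 0 and let u, ũ, w, w̃ be real numbers with |w| < r, |w̃| < r, u > 0, and ũ > 0. Then (w − w̃)(u − ũ) ≤ max{1/(4r), 4r} · ( ũ·|w − w̃|² + u − ũ − ũ·(ln u − ln ũ) ). -/
/-!
With `d = w - w̃`, `s = u / ũ` and `C = max (1/(4r)) (4r)`, dividing by `ũ` reduces the claim to
`d (s - 1) ≤ C (d² + s - 1 - log s)`. The convex function `s ↦ s - 1 - log s` has conjugate
`x ↦ -x - log (1 - x)`, so Fenchel–Young at `x = d / C` bounds `x (s - 1)` by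
`(s - 1 - log s) + (-x - log (1 - x))`, and the last term is at most `x²` because
`|x| ≤ 1/2` (as `C ≥ 4r > 2|d|`). Finally `x² ≤ d²` because `C ≥ 1`.
-/

open Real

lemma neg_log_one_sub_sub_le {x : ℝ} (hx : |x| < 1) :
    -log (1 - x) - x ≤ x ^ 2 * (1 - |x|)⁻¹ / 2 := by
  have h := Complex.norm_log_one_add_sub_self_le (z := -(x : ℂ)) (by simpa using hx)
  have hpos : 0 < 1 - x := by linarith [le_abs_self x]
  rw [show (1 : ℂ) + -(x : ℂ) = ((1 - x : ℝ) : ℂ) by push_cast; ring,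
    ← Complex.ofReal_log hpos.le, ← Complex.ofReal_neg, ← Complex.ofReal_sub,
    Complex.norm_real, Complex.norm_real, norm_eq_abs, norm_eq_abs, abs_neg, sq_abs] at h
  linarith [neg_abs_le (log (1 - x) - -x)]

lemma neg_log_one_sub_sub_le_sq {x : ℝ} (hx : |x| ≤ 1 / 2) : -log (1 - x) - x ≤ x ^ 2 := by
  refine (neg_log_one_sub_sub_le (by linarith)).trans ?_
  have h2 : (1 - |x|)⁻¹ ≤ 2 := by
    rw [inv_le_comm₀ (by linarith) two_pos]; linarith
  nlinarith [sq_nonneg x]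

lemma mul_sub_one_le_sub_one_sub_log_add {s x : ℝ} (hs : 0 < s) (hx : x < 1) :
    x * (s - 1) ≤ (s - 1 - log s) + (-log (1 - x) - x) := by
  have h := log_le_sub_one_of_pos (mul_pos (sub_pos.mpr hx) hs)
  rw [log_mul (sub_pos.mpr hx).ne' hs.ne'] at h
  nlinarith

lemma one_le_max_inv_self {a : ℝ} (ha : 0 < a) : 1 ≤ max a⁻¹ a := by
  rcases le_total 1 a with h | h
  · exact le_max_of_le_right h
  · exact le_max_of_le_left ((one_le_inv₀ ha).mpr h)

lemma mul_sub_one_le_mul_sq_add_sub_one_sub_log {C d s : ℝ} (hC : 1 ≤ C) (hd : 2 * |d| ≤ C)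
    (hs : 0 < s) : d * (s - 1) ≤ C * (d ^ 2 + s - 1 - log s) := by
  have hC0 : 0 < C := by linarith
  have hx : |d / C| ≤ 1 / 2 := by
    rw [abs_div, abs_of_pos hC0, div_le_iff₀ hC0]; linarith
  have hsq : (d / C) ^ 2 ≤ d ^ 2 := by
    rw [div_pow]
    exact div_le_self (sq_nonneg d) (one_le_pow₀ hC)
  calc d * (s - 1) = C * (d / C * (s - 1)) := by field_simp
    _ ≤ C * ((s - 1 - log s) + (-log (1 - d / C) - d / C)) := by
      gcongr
      exact mul_sub_one_le_sub_one_sub_log_add hs (by linarith [le_abs_self (d / C)])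
    _ ≤ C * (d ^ 2 + s - 1 - log s) := by
      gcongr
      linarith [neg_log_one_sub_sub_le_sq hx]

/-- Fenchel–Young type estimate (Lemma on product of differences):
for `|w|, |w̃| < r` and `u, ũ > 0`,
`(w − w̃)(u − ũ) ≤ max{1/(4r), 4r}·(ũ|w − w̃|² + u − ũ − ũ(ln u − ln ũ))`. -/
theorem fenchel_young_product_estimate
    (r u ut w wt : ℝ) (hr : 0 < r) (hw : |w| < r) (hwt : |wt| < r)
    (hu : 0 < u) (hut : 0 < ut) :
    (w - wt) * (u - ut) ≤
      max (1 / (4 * r)) (4 * r) *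
        (ut * |w - wt| ^ 2 + u - ut - ut * (Real.log u - Real.log ut)) := by
  have hC : 1 ≤ max (1 / (4 * r)) (4 * r) := by
    simpa only [one_div] using one_le_max_inv_self (by positivity : 0 < 4 * r)
  set C := max (1 / (4 * r)) (4 * r)
  have hd : 2 * |w - wt| ≤ C := by
    linarith [abs_sub w wt, le_max_right (1 / (4 * r)) (4 * r)]
  calc (w - wt) * (u - ut) = ut * ((w - wt) * (u / ut - 1)) := by field_simp
    _ ≤ ut * (C * ((w - wt) ^ 2 + u / ut - 1 - log (u / ut))) :=
      mul_le_mul_of_nonneg_left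
        (mul_sub_one_le_mul_sq_add_sub_one_sub_log hC hd (div_pos hu hut)) hut.le
    _ = C * (ut * |w - wt| ^ 2 + u - ut - ut * (log u - log ut)) := by
      rw [log_div hu.ne' hut.ne', sq_abs]
      field_simp
end

section
/- Let g : [0,T] → ℝ be bounded and suppose there is a constant c̃ > 0 such that g(t+h) − g(t) ≤ c̃·h for all t ∈ [0,T) and all sufficiently small h > 0 with t+h ≤ T. Then g has bounded total variation on [0,T], with TV(g,[0,T]) ≤ |g(T) − g(0)| + 2c̃·T. -/
/-!
The one-sided bound says that the drift `t ↦ c̃ t - g t` does not decrease over any step of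
length at most `h₀`; chaining such steps, it is nondecreasing on all of `[0,T]`. So `g` is the
difference of the nondecreasing functions `t ↦ c̃ t` and the drift, and its variation is at most
the sum of their increments, `c̃ T + (c̃ T - (g T - g 0)) ≤ |g T - g 0| + 2 c̃ T`.
-/

open Set

theorem eVariationOn_sub_le {α E : Type*} [LinearOrder α] [SeminormedAddCommGroup E]
    (f g : α → E) (s : Set α) :
    eVariationOn (f - g) s ≤ eVariationOn f s + eVariationOn g s := by
  refine iSup_le fun ⟨n, u, hu, us⟩ => ?_
  calc ∑ i ∈ Finset.range n, edist ((f - g) (u (i + 1))) ((f - g) (u i))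
      ≤ ∑ i ∈ Finset.range n,
          (edist (f (u (i + 1))) (f (u i)) + edist (g (u (i + 1))) (g (u i))) := by
        gcongr with i
        simpa [sub_eq_add_neg] using
          edist_add_add_le (f (u (i + 1))) (-g (u (i + 1))) (f (u i)) (-g (u i))
    _ ≤ eVariationOn f s + eVariationOn g s := by
        rw [Finset.sum_add_distrib]
        exact add_le_add (eVariationOn.sum_le hu us) (eVariationOn.sum_le hu us)

theorem monotoneOn_Icc_of_le_add {f : ℝ → ℝ} {a b δ : ℝ} (hδ : 0 < δ)
    (hf : ∀ t ∈ Ico a b, ∀ h, 0 < h → h ≤ δ → t + h ≤ b → f t ≤ f (t + h)) :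
    MonotoneOn f (Icc a b) := by
  have steps : ∀ n : ℕ, ∀ s ∈ Icc a b, ∀ t ∈ Icc a b, s ≤ t → t - s ≤ n * δ → f s ≤ f t := by
    intro n
    induction n with
    | zero =>
      intro s _ t _ hst hts
      rw [le_antisymm hst (by simpa using hts)]
    | succ n ih =>
      intro s hs t ht hst hts
      rcases hst.eq_or_lt with rfl | hlt
      · rfl
      rcases le_or_gt (t - s) δ with hnear | hfar
      · simpa using
          hf s ⟨hs.1, hlt.trans_le ht.2⟩ (t - s) (by linarith) hnear (by linarith [ht.2])
      · have hmid : s + δ ∈ Icc a b := ⟨by linarith [hs.1], by linarith [ht.2]⟩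
        calc f s ≤ f (s + δ) := hf s ⟨hs.1, by linarith [ht.2]⟩ δ hδ le_rfl hmid.2
          _ ≤ f t := ih (s + δ) hmid t ht (by linarith) (by push_cast at hts; linarith)
  intro s hs t ht hst
  refine steps ⌈(t - s) / δ⌉₊ s hs t ht hst ?_
  rw [← div_le_iff₀ hδ]
  exact Nat.le_ceil _

theorem bv_of_one_sided_increment_bound_general
    (T ctil : ℝ) (g : ℝ → ℝ) (hT : 0 < T) (hct : 0 < ctil)
    (hinc : ∃ h₀ > (0:ℝ), ∀ t ∈ Set.Ico (0:ℝ) T, ∀ h : ℝ, 0 < h → h ≤ h₀ →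
      t + h ≤ T → g (t + h) - g t ≤ ctil * h) :
    eVariationOn g (Set.Icc 0 T) ≤ ENNReal.ofReal (|g T - g 0| + 2 * ctil * T) := by
  obtain ⟨δ, hδ, hinc⟩ := hinc
  have h0 : (0 : ℝ) ∈ Icc 0 T := ⟨le_rfl, hT.le⟩
  have hT' : T ∈ Icc 0 T := ⟨hT.le, le_rfl⟩
  have hlin : MonotoneOn (fun t => ctil * t) (Icc 0 T) :=
    (monotone_id.const_mul hct.le).monotoneOn _
  have hdrift : MonotoneOn (fun t => ctil * t - g t) (Icc 0 T) :=
    monotoneOn_Icc_of_le_add hδ fun t ht h hh hhδ hb => by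
      linarith [hinc t ht h hh hhδ hb]
  calc eVariationOn g (Icc 0 T)
      = eVariationOn ((fun t => ctil * t) - fun t => ctil * t - g t) (Icc 0 T) := by
        congr 1; ext t; simp
    _ ≤ eVariationOn (fun t => ctil * t) (Icc 0 T)
          + eVariationOn (fun t => ctil * t - g t) (Icc 0 T) := eVariationOn_sub_le _ _ _
    _ = ENNReal.ofReal (ctil * T - ctil * 0)
          + ENNReal.ofReal (ctil * T - g T - (ctil * 0 - g 0)) := by
        rw [← hlin.eVariationOn_eq h0 hT', ← hdrift.eVariationOn_eq h0 hT', inter_self]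
    _ = ENNReal.ofReal (2 * ctil * T - (g T - g 0)) := by
        rw [← ENNReal.ofReal_add (by nlinarith) (by linarith [hdrift h0 hT' hT.le])]
        ring_nf
    _ ≤ ENNReal.ofReal (|g T - g 0| + 2 * ctil * T) :=
        ENNReal.ofReal_le_ofReal (by linarith [neg_abs_le (g T - g 0)])

/-- If `g : [0,T] → ℝ` is bounded and satisfies the one-sided increment bound
`g(t+h) − g(t) ≤ c̃·h` for all `t` and all sufficiently small `h > 0` with
`t + h ≤ T`, then `g` has bounded total variation on `[0,T]`, with
`TV(g,[0,T]) ≤ |g(T) − g(0)| + 2c̃·T`. -/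
theorem bv_of_one_sided_increment_bound
    (T ctil : ℝ) (g : ℝ → ℝ) (hT : 0 < T) (hct : 0 < ctil)
    (hbdd : ∃ K : ℝ, ∀ t ∈ Set.Icc (0:ℝ) T, |g t| ≤ K)
    (hinc : ∃ h₀ > (0:ℝ), ∀ t ∈ Set.Ico (0:ℝ) T, ∀ h : ℝ, 0 < h → h ≤ h₀ →
      t + h ≤ T → g (t + h) - g t ≤ ctil * h) :
    eVariationOn g (Set.Icc 0 T) ≤ ENNReal.ofReal (|g T - g 0| + 2 * ctil * T) :=
  bv_of_one_sided_increment_bound_general T ctil g hT hct hinc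
end
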